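/- arXiv:1303.4683 — 3 statements merged into one kernel-verified Lean document; each statement's English description precedes it below -/
import Mathlib

section
/- The numerical range (field of values) of any complex n×n matrix A, defined as { v^H A v : ‖v‖ = 1 }, is a convex subset of C (Toeplitz–Hausdorff theorem). -/
/-!
Let `q(v) = ⟪v, T v⟫` and let `x`, `y` be unit vectors with `q x ≠ q y`. Replacing `T` by
`(q y - q x)⁻¹ • (T - q x • 1)` moves `q x` to `0` and `q y` to `1` on unit vectors, so it suffices
to reach every `s ∈ [0, 1]`. Multiplying `y` by a unimodular scalar makes the cross term
`⟪x, T y⟫ - conj ⟪y, T x⟫` real, and then `q` is real on the whole real span of `x` and `y`.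
Since `q x = 0 ≠ 1 = q y`, the vectors `x`, `y` are linearly independent, so
`t ↦ q((1 - t) x + t y) / ‖(1 - t) x + t y‖²` is a continuous real function with values `0` at
`t = 0` and `1` at `t = 1`; the intermediate value theorem gives every `s ∈ [0, 1]`.
-/

open Matrix ComplexConjugate InnerProductSpace

lemma Complex.exists_norm_eq_one_im_mul_eq_zero (d : ℂ) : ∃ c : ℂ, ‖c‖ = 1 ∧ (c * d).im = 0 := by
  refine ⟨exp (-d.arg * I), by exact_mod_cast norm_exp_ofReal_mul_I _, ?_⟩
  conv_lhs => rw [← norm_mul_exp_arg_mul_I d]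
  rw [mul_left_comm, ← exp_add]
  simp

namespace ContinuousLinearMap

variable {E : Type*} [NormedAddCommGroup E] [InnerProductSpace ℂ E]

def numericalRange (T : E →L[ℂ] E) : Set ℂ := {z | ∃ v, ‖v‖ = 1 ∧ ⟪v, T v⟫_ℂ = z}

variable (T : E →L[ℂ] E)

lemma inner_smul_apply_smul (a : ℂ) (x : E) :
    ⟪a • x, T (a • x)⟫_ℂ = conj a * a * ⟪x, T x⟫_ℂ := by
  rw [map_smul, inner_smul_left, inner_smul_right, mul_assoc]

lemma inner_smul_sub_smul_one_apply {v : E} (hv : ‖v‖ = 1) (a z : ℂ) :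
    ⟪v, (a • (T - z • 1)) v⟫_ℂ = a * (⟪v, T v⟫_ℂ - z) := by
  simp [inner_self_eq_norm_sq_to_K, hv]

lemma div_norm_sq_mem_numericalRange {v : E} (hv : v ≠ 0) :
    ⟪v, T v⟫_ℂ / (‖v‖ : ℂ) ^ 2 ∈ T.numericalRange := by
  refine ⟨(‖v‖⁻¹ : ℂ) • v, norm_smul_inv_norm hv, ?_⟩
  rw [inner_smul_apply_smul, map_inv₀, Complex.conj_ofReal]
  field_simp

lemma im_inner_apply_ofReal_smul_add_ofReal_smul {x y : E} (hx : (⟪x, T x⟫_ℂ).im = 0)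
    (hy : (⟪y, T y⟫_ℂ).im = 0) (hxy : (⟪x, T y⟫_ℂ - conj ⟪y, T x⟫_ℂ).im = 0) (s t : ℝ) :
    (⟪(s : ℂ) • x + (t : ℂ) • y, T ((s : ℂ) • x + (t : ℂ) • y)⟫_ℂ).im = 0 := by
  simp only [map_add, map_smul, inner_add_left, inner_add_right, inner_smul_left,
    inner_smul_right, Complex.conj_ofReal, Complex.add_im, Complex.mul_im, Complex.ofReal_re,
    Complex.ofReal_im]
  simp only [Complex.sub_im, Complex.conj_im] at hxy
  rw [hx, hy]
  linear_combination s * t * hxy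

lemma linearIndependent_pair_of_inner_apply_self {x y : E} (hx₀ : x ≠ 0)
    (hx : ⟪x, T x⟫_ℂ = 0) (hy : ⟪y, T y⟫_ℂ = 1) : LinearIndependent ℂ ![x, y] := by
  refine (LinearIndependent.pair_iff' hx₀).mpr fun a hax => ?_
  simp [← hax, hx] at hy

lemma ofReal_mem_numericalRange_of_im_cross_eq_zero {x y : E} (hx₁ : ‖x‖ = 1) (hy₁ : ‖y‖ = 1)
    (hx : ⟪x, T x⟫_ℂ = 0) (hy : ⟪y, T y⟫_ℂ = 1) (hxy : (⟪x, T y⟫_ℂ - conj ⟪y, T x⟫_ℂ).im = 0)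
    {s : ℝ} (hs : s ∈ Set.Icc (0 : ℝ) 1) : (s : ℂ) ∈ T.numericalRange := by
  set v : ℝ → E := fun t => ((1 - t : ℝ) : ℂ) • x + (t : ℂ) • y
  have hv : ∀ t, v t ≠ 0 := by
    intro t ht
    have hindep := T.linearIndependent_pair_of_inner_apply_self
      (norm_ne_zero_iff.mp (by simp [hx₁])) hx hy
    obtain ⟨h₁, h₀⟩ := LinearIndependent.pair_iff.mp hindep _ _ ht
    rw [Complex.ofReal_eq_zero] at h₁ h₀
    linarith
  have him : ∀ t, (⟪v t, T (v t)⟫_ℂ).im = 0 := fun t =>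
    T.im_inner_apply_ofReal_smul_add_ofReal_smul (by simp [hx]) (by simp [hy]) hxy _ _
  set f : ℝ → ℝ := fun t => (⟪v t, T (v t)⟫_ℂ).re / ‖v t‖ ^ 2
  have hf : Continuous f :=
    Continuous.div (by fun_prop) (by fun_prop) fun t => pow_ne_zero _ (norm_ne_zero_iff.mpr (hv t))
  obtain ⟨t, -, hft⟩ := intermediate_value_Icc zero_le_one hf.continuousOn
    (show s ∈ Set.Icc (f 0) (f 1) by simpa [f, v, hx, hy, hx₁, hy₁] using hs)
  convert T.div_norm_sq_mem_numericalRange (hv t) using 1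
  rw [← hft, ← Complex.re_add_im ⟪v t, T (v t)⟫_ℂ, him]
  simp [f]

lemma ofReal_mem_numericalRange_of_inner_apply_self {x y : E} (hx₁ : ‖x‖ = 1) (hy₁ : ‖y‖ = 1)
    (hx : ⟪x, T x⟫_ℂ = 0) (hy : ⟪y, T y⟫_ℂ = 1) {s : ℝ} (hs : s ∈ Set.Icc (0 : ℝ) 1) :
    (s : ℂ) ∈ T.numericalRange := by
  obtain ⟨c, hc, hcd⟩ := Complex.exists_norm_eq_one_im_mul_eq_zero (⟪x, T y⟫_ℂ - conj ⟪y, T x⟫_ℂ)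
  refine T.ofReal_mem_numericalRange_of_im_cross_eq_zero (y := c • y) hx₁
    (by rw [norm_smul, hc, hy₁, one_mul]) hx ?_ ?_ hs
  · rw [inner_smul_apply_smul, hy, mul_one, Complex.conj_mul', hc]
    norm_num
  · rwa [map_smul, inner_smul_right, inner_smul_left, map_mul, Complex.conj_conj, ← mul_sub]

theorem convex_numericalRange : Convex ℝ T.numericalRange := by
  rintro _ ⟨x, hx, rfl⟩ _ ⟨y, hy, rfl⟩ a b ha hb hab
  by_cases hxy : ⟪x, T x⟫_ℂ = ⟪y, T y⟫_ℂ
  · exact ⟨x, hx, by rw [← hxy, ← add_smul, hab, one_smul]⟩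
  have hd : ⟪y, T y⟫_ℂ - ⟪x, T x⟫_ℂ ≠ 0 := sub_ne_zero.mpr (Ne.symm hxy)
  obtain ⟨u, hu, hBu⟩ := ofReal_mem_numericalRange_of_inner_apply_self
    ((⟪y, T y⟫_ℂ - ⟪x, T x⟫_ℂ)⁻¹ • (T - ⟪x, T x⟫_ℂ • 1)) hx hy
    (by rw [inner_smul_sub_smul_one_apply _ hx, sub_self, mul_zero])
    (by rw [inner_smul_sub_smul_one_apply _ hy, inv_mul_cancel₀ hd]) ⟨hb, by linarith⟩
  refine ⟨u, hu, ?_⟩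
  rw [inner_smul_sub_smul_one_apply _ hu, inv_mul_eq_iff_eq_mul₀ hd] at hBu
  rw [Complex.real_smul, Complex.real_smul, eq_sub_of_add_eq hab, Complex.ofReal_sub,
    Complex.ofReal_one]
  linear_combination hBu

end ContinuousLinearMap

lemma Matrix.numericalRange_toEuclideanCLM {ι : Type*} [Fintype ι] [DecidableEq ι]
    (A : Matrix ι ι ℂ) : (toEuclideanCLM (n := ι) (𝕜 := ℂ) A).numericalRange =
      {z | ∃ v : ι → ℂ, star v ⬝ᵥ v = 1 ∧ star v ⬝ᵥ A *ᵥ v = z} := by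
  have hnorm (v : ι → ℂ) : ‖(WithLp.toLp 2 v : EuclideanSpace ℂ ι)‖ = 1 ↔ star v ⬝ᵥ v = 1 := by
    rw [dotProduct_comm, ← EuclideanSpace.inner_toLp_toLp, inner_self_eq_norm_sq_to_K,
      ← RCLike.ofReal_pow, ← RCLike.ofReal_one (K := ℂ), RCLike.ofReal_inj,
      pow_eq_one_iff_of_nonneg (norm_nonneg _) two_ne_zero]
  have hform (v : ι → ℂ) :
      ⟪WithLp.toLp 2 v, toEuclideanCLM (n := ι) (𝕜 := ℂ) A (WithLp.toLp 2 v)⟫_ℂ =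
        star v ⬝ᵥ A *ᵥ v := by
    rw [toEuclideanCLM_toLp, EuclideanSpace.inner_toLp_toLp, dotProduct_comm]
  ext z
  constructor
  · rintro ⟨w, hw, rfl⟩
    exact ⟨w.ofLp, (hnorm _).mp hw, (hform _).symm⟩
  · rintro ⟨v, hv, rfl⟩
    exact ⟨WithLp.toLp 2 v, (hnorm v).mpr hv, hform v⟩

/-- Toeplitz–Hausdorff theorem: the numerical range (field of values)
`W(A) = { vᴴ A v : ‖v‖ = 1 }` of any complex `n × n` matrix `A` is a convex subset of `ℂ`. -/
theorem numericalRange_convex {n : ℕ} (A : Matrix (Fin n) (Fin n) ℂ) :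
    Convex ℝ {z : ℂ | ∃ v : Fin n → ℂ, star v ⬝ᵥ v = 1 ∧ star v ⬝ᵥ A.mulVec v = z} := by
  rw [← numericalRange_toEuclideanCLM]
  exact ContinuousLinearMap.convex_numericalRange _
end

section
/- Conversely, if R ⊆ R_+^K is compact, downward closed within R_+^K (i.e., 0 ≤ y ≤ r ∈ R implies y ∈ R), and r* ∈ W(R) has all components strictly positive, then taking α_k = r*_k / Σ_j r*_j, the rate profile optimization with profile α has optimal value t* = Σ_j r*_j, i.e., r* lies on the ray and achieves the optimum. -/
/-- Every weak Pareto optimal point `r*` of a compact, downward closed region `R ⊆ ℝ₊^K`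
with strictly positive components solves the rate profile problem for the profile
`α_k = r*_k / Σ_j r*_j`, with optimal value `t* = Σ_j r*_j`. -/
theorem weak_pareto_solves_rate_profile {K : ℕ}
    (R : Set (Fin K → ℝ)) (hR : IsCompact R)
    (hRpos : ∀ r ∈ R, ∀ k, 0 ≤ r k)
    (hdc : ∀ r ∈ R, ∀ y : Fin K → ℝ, (∀ k, 0 ≤ y k) → (∀ k, y k ≤ r k) → y ∈ R)
    (rstar : Fin K → ℝ) (hmem : rstar ∈ R)
    (hW : ¬∃ y ∈ R, ∀ k, rstar k < y k)
    (hpos : ∀ k, 0 < rstar k) :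
    IsGreatest {t : ℝ | 0 ≤ t ∧ ∃ r ∈ R, ∀ k, (rstar k / ∑ j, rstar j) * t ≤ r k}
      (∑ j, rstar j) := by
  rcases Nat.eq_zero_or_pos K with hK | hK
  · exact absurd ⟨rstar, hmem, fun k => absurd k.2 (by omega)⟩ hW
  · have hS : 0 < ∑ j, rstar j := by
      have : Nonempty (Fin K) := Fin.pos_iff_nonempty.mp hK
      exact Finset.sum_pos (fun j _ => hpos j) Finset.univ_nonempty
    constructor
    · refine ⟨le_of_lt hS, rstar, hmem, fun k => ?_⟩
      rw [div_mul_cancel₀ _ (ne_of_gt hS)]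
    · rintro t ⟨ht0, r, hr, hrk⟩
      by_contra hgt
      push_neg at hgt
      refine hW ⟨r, hr, fun k => ?_⟩
      calc rstar k = (rstar k / ∑ j, rstar j) * (∑ j, rstar j) := by
            rw [div_mul_cancel₀ _ (ne_of_gt hS)]
        _ < (rstar k / ∑ j, rstar j) * t := by
            exact mul_lt_mul_of_pos_left hgt (div_pos (hpos k) hS)
        _ ≤ r k := hrk k
end

section
/- With Q(ρ) = h h^H − (2^ρ − 1) M for Hermitian positive definite M and ρ ≥ 0, the largest eigenvalue of Q(ρ) is a nonincreasing function of ρ, and there exists ρ_max ≥ 0 such that a unit vector v with v^H Q(ρ) v = 0 exists if and only if 0 ≤ ρ ≤ ρ_max; moreover ρ_max = log2(1 + h^H M^{-1} h). -/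
open Matrix ComplexOrder

/-!
Write `t = 2^ρ - 1`, so that `vᴴ Q(ρ) v = |hᴴv|² - t vᴴMv`. Since `Q(ρ₁) - Q(ρ₂) = (t₂ - t₁) M ⪰ 0`,
the largest eigenvalue can only decrease. Cauchy–Schwarz for the inner product `⟪x, y⟫ = xᴴMy`,
applied to `M⁻¹h` and `v`, gives `|hᴴv|² ≤ (hᴴM⁻¹h) vᴴMv`, so a unit vector on which the form
vanishes forces `t ≤ hᴴM⁻¹h`, i.e. `ρ ≤ log₂(1 + hᴴM⁻¹h)`. Conversely, if `t ≤ hᴴM⁻¹h`, the form is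
`≤ 0` at a nonzero `w ⊥ h` (which exists because `n ≥ 2`) and `≥ 0` at `M⁻¹h`; as `hᴴ` does not
vanish on the segment between them except at `w`, the intermediate value theorem on that segment
yields a nonzero vector where the form vanishes.
-/

noncomputable def maxEig {n : ℕ} {A : Matrix (Fin n) (Fin n) ℂ} (hA : A.IsHermitian) : ℝ :=
  ⨆ i, hA.eigenvalues i

open scoped MatrixOrder

namespace Matrix

section Dual

variable {K ι : Type*} [Field K] [Fintype ι] [DecidableEq ι]

lemma exists_ne_zero_dotProduct_eq_zero (hι : 1 < Fintype.card ι) (u : ι → K) :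
    ∃ w ≠ 0, u ⬝ᵥ w = 0 := by
  obtain ⟨w, hw, hw0⟩ := (Submodule.ne_bot_iff _).mp
    ((dotProductEquiv K ι u).ker_ne_bot_of_finrank_lt (by simpa using hι))
  exact ⟨w, hw0, hw⟩

end Dual

variable {ι : Type*}

lemma isHermitian_vecMulVec_star_sub_ofReal_smul (h : ι → ℂ) {M : Matrix ι ι ℂ}
    (hM : M.IsHermitian) (t : ℝ) : (vecMulVec h (star h) - (t : ℂ) • M).IsHermitian := by
  refine IsHermitian.sub ?_ ?_
  · rw [IsHermitian, conjTranspose_vecMulVec, star_star]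
  · rw [IsHermitian, conjTranspose_smul, hM.eq, Complex.star_def, Complex.conj_ofReal]

variable [Fintype ι]

lemma star_dotProduct_vecMulVec_sub_smul_mulVec (h x : ι → ℂ) (M : Matrix ι ι ℂ) (t : ℂ) :
    star x ⬝ᵥ (vecMulVec h (star h) - t • M) *ᵥ x
      = Complex.normSq (star h ⬝ᵥ x) - t * (star x ⬝ᵥ M *ᵥ x) := by
  rw [sub_mulVec, dotProduct_sub, vecMulVec_mulVec, op_smul_eq_smul, dotProduct_smul,
    smul_mulVec, dotProduct_smul, smul_eq_mul, smul_eq_mul, Complex.normSq_eq_conj_mul_self,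
    ← Complex.star_def, star_dotProduct, star_star, mul_comm]

lemma exists_unit_star_dotProduct_mulVec_eq_zero {A : Matrix ι ι ℂ} {z : ι → ℂ} (hz : z ≠ 0)
    (hAz : star z ⬝ᵥ A *ᵥ z = 0) : ∃ v, star v ⬝ᵥ v = 1 ∧ star v ⬝ᵥ A *ᵥ v = 0 := by
  set r : ℝ := ‖WithLp.toLp 2 z‖
  have hr : r ≠ 0 := by simpa [r] using hz
  have hzz : star z ⬝ᵥ z = (r : ℂ) ^ 2 := by
    rw [dotProduct_comm, ← EuclideanSpace.inner_eq_star_dotProduct, inner_self_eq_norm_sq_to_K]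
    rfl
  refine ⟨(r⁻¹ : ℂ) • z, ?_, ?_⟩
  · rw [star_smul, smul_dotProduct, dotProduct_smul, hzz, smul_eq_mul, smul_eq_mul,
      Complex.star_def, Complex.conj_inv, Complex.conj_ofReal]
    field_simp
  · simp [mulVec_smul, hAz]

lemma IsHermitian.exists_ne_zero_star_dotProduct_mulVec_eq_zero {A : Matrix ι ι ℂ}
    (hA : A.IsHermitian) {x y : ι → ℂ} (hx : (star x ⬝ᵥ A *ᵥ x).re ≤ 0)
    (hy : 0 ≤ (star y ⬝ᵥ A *ᵥ y).re) (h0 : (0 : ι → ℂ) ∉ segment ℝ x y) :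
    ∃ z ≠ 0, star z ⬝ᵥ A *ᵥ z = 0 := by
  have hcont : Continuous fun z : ι → ℂ => (star z ⬝ᵥ A *ᵥ z).re := by fun_prop
  obtain ⟨z, hz, hz0⟩ := (convex_segment x y).isPreconnected.intermediate_value
    (left_mem_segment ℝ x y) (right_mem_segment ℝ x y) hcont.continuousOn ⟨hx, hy⟩
  exact ⟨z, fun h => h0 (h ▸ hz), Complex.ext hz0 (hA.im_star_dotProduct_mulVec_self z)⟩

namespace IsHermitian

variable {n : ℕ} {A B : Matrix (Fin n) (Fin n) ℂ}

lemma le_algebraMap_maxEig (hA : A.IsHermitian) : A ≤ algebraMap ℝ _ (maxEig hA) := by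
  rw [le_algebraMap_iff_spectrum_le hA.isSelfAdjoint, hA.spectrum_real_eq_range_eigenvalues]
  rintro _ ⟨i, rfl⟩
  exact le_ciSup (Set.finite_range _).bddAbove i

lemma maxEig_le [Nonempty (Fin n)] (hA : A.IsHermitian) {r : ℝ} (h : A ≤ algebraMap ℝ _ r) :
    maxEig hA ≤ r := by
  rw [le_algebraMap_iff_spectrum_le hA.isSelfAdjoint, hA.spectrum_real_eq_range_eigenvalues] at h
  exact ciSup_le fun i => h _ ⟨i, rfl⟩

lemma maxEig_mono (hA : A.IsHermitian) (hB : B.IsHermitian) (hAB : A ≤ B) :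
    maxEig hA ≤ maxEig hB := by
  rcases isEmpty_or_nonempty (Fin n) with _ | _
  · simp [maxEig]
  · exact hA.maxEig_le (hAB.trans hB.le_algebraMap_maxEig)

end IsHermitian

namespace PosDef

variable [DecidableEq ι] {M : Matrix ι ι ℂ}

lemma star_inv_mulVec_vecMul (hM : M.PosDef) (h : ι → ℂ) : star (M⁻¹ *ᵥ h) ᵥ* M = star h := by
  rw [star_mulVec, hM.inv.isHermitian.eq, vecMul_vecMul,
    nonsing_inv_mul _ ((isUnit_iff_isUnit_det M).mp hM.isUnit), vecMul_one]

lemma normSq_dotProduct_le (hM : M.PosDef) (h x : ι → ℂ) :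
    Complex.normSq (star h ⬝ᵥ x) ≤ (star h ⬝ᵥ M⁻¹ *ᵥ h).re * (star x ⬝ᵥ M *ᵥ x).re := by
  let := M.toSeminormedAddCommGroup hM.posSemidef
  let := M.toInnerProductSpace hM.posSemidef
  have hinner (y z : ι → ℂ) : inner ℂ y z = star y ⬝ᵥ M *ᵥ z := dotProduct_comm _ _
  have hw := hM.star_inv_mulVec_vecMul h
  have hwx : inner ℂ (M⁻¹ *ᵥ h) x = star h ⬝ᵥ x := by rw [hinner, dotProduct_mulVec, hw]
  have hxw : inner ℂ x (M⁻¹ *ᵥ h) = star (star h ⬝ᵥ x) := by rw [← inner_conj_symm, hwx]; rfl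
  have hww : inner ℂ (M⁻¹ *ᵥ h) (M⁻¹ *ᵥ h) = star h ⬝ᵥ M⁻¹ *ᵥ h := by
    rw [hinner, dotProduct_mulVec, hw]
  have hcs := inner_mul_inner_self_le (𝕜 := ℂ) (M⁻¹ *ᵥ h) x
  rwa [hwx, hxw, hww, hinner, norm_star, ← sq, ← Complex.normSq_eq_norm_sq] at hcs

lemma le_of_star_dotProduct_vecMulVec_sub_smul_mulVec_eq_zero (hM : M.PosDef) {h v : ι → ℂ}
    {t : ℝ} (hv : v ≠ 0) (hQv : star v ⬝ᵥ (vecMulVec h (star h) - (t : ℂ) • M) *ᵥ v = 0) :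
    t ≤ (star h ⬝ᵥ M⁻¹ *ᵥ h).re := by
  have hMv := hM.re_dotProduct_pos hv
  have hbal : Complex.normSq (star h ⬝ᵥ v) = t * (star v ⬝ᵥ M *ᵥ v).re := by
    have := congrArg Complex.re hQv
    rw [star_dotProduct_vecMulVec_sub_smul_mulVec, Complex.sub_re, Complex.re_ofReal_mul] at this
    simpa [sub_eq_zero] using this
  have hcs := hM.normSq_dotProduct_le h v
  rw [hbal] at hcs
  exact le_of_mul_le_mul_right hcs hMv

lemma exists_ne_zero_star_dotProduct_vecMulVec_sub_smul_mulVec_eq_zero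
    (hι : 1 < Fintype.card ι) (hM : M.PosDef) (h : ι → ℂ) {t : ℝ} (ht : 0 ≤ t)
    (htc : t ≤ (star h ⬝ᵥ M⁻¹ *ᵥ h).re) :
    ∃ z ≠ 0, star z ⬝ᵥ (vecMulVec h (star h) - (t : ℂ) • M) *ᵥ z = 0 := by
  obtain ⟨w, hw0, hhw⟩ := exists_ne_zero_dotProduct_eq_zero hι (star h)
  have hQw : star w ⬝ᵥ (vecMulVec h (star h) - (t : ℂ) • M) *ᵥ w = -t * (star w ⬝ᵥ M *ᵥ w) := by
    rw [star_dotProduct_vecMulVec_sub_smul_mulVec, hhw, map_zero, Complex.ofReal_zero, zero_sub,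
      neg_mul]
  rcases eq_or_ne h 0 with rfl | hh
  · refine ⟨w, hw0, ?_⟩
    have ht0 : t = 0 := le_antisymm (by simpa using htc) ht
    rw [hQw, ht0, Complex.ofReal_zero, neg_zero, zero_mul]
  set v₀ := M⁻¹ *ᵥ h
  set c := (star h ⬝ᵥ v₀).re
  have hhv₀ : star h ⬝ᵥ v₀ = c :=
    Complex.ext rfl (hM.inv.isHermitian.im_star_dotProduct_mulVec_self h)
  have hc0 : 0 < c := hM.inv.re_dotProduct_pos hh
  have hMv₀ : star v₀ ⬝ᵥ M *ᵥ v₀ = c := by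
    rw [dotProduct_mulVec, hM.star_inv_mulVec_vecMul, hhv₀]
  refine (isHermitian_vecMulVec_star_sub_ofReal_smul h hM.isHermitian t
    ).exists_ne_zero_star_dotProduct_mulVec_eq_zero (x := w) (y := v₀) ?_ ?_ ?_
  · rw [hQw, ← Complex.ofReal_neg, Complex.re_ofReal_mul]
    exact mul_nonpos_of_nonpos_of_nonneg (neg_nonpos.mpr ht) (hM.posSemidef.re_dotProduct_nonneg w)
  · rw [star_dotProduct_vecMulVec_sub_smul_mulVec, hhv₀, hMv₀, Complex.normSq_ofReal,
      ← Complex.ofReal_mul, ← Complex.ofReal_sub, Complex.ofReal_re]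
    nlinarith
  · rintro ⟨a, b, -, hb, hab, hz⟩
    have hb0 : b * c = 0 := by
      simpa [hhw, hhv₀] using congrArg (fun z => (star h ⬝ᵥ z).re) hz
    obtain rfl : b = 0 := (mul_eq_zero.mp hb0).resolve_right hc0.ne'
    obtain rfl : a = 1 := by linarith
    exact hw0 (by simpa using hz)

end PosDef

end Matrix

/-- With `Q(ρ) = h hᴴ − (2^ρ − 1) M` for `M ≻ 0`, the largest eigenvalue of `Q(ρ)` is
nonincreasing in `ρ`, and a unit vector `v` with `vᴴ Q(ρ) v = 0` exists iff
`0 ≤ ρ ≤ ρ_max = log₂(1 + hᴴ M⁻¹ h)`. -/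
theorem feasibility_interval_rho {n : ℕ} (hn : 2 ≤ n) (h : Fin n → ℂ)
    (M : Matrix (Fin n) (Fin n) ℂ) (hM : M.PosDef)
    (Q : ℝ → Matrix (Fin n) (Fin n) ℂ)
    (hQ : ∀ ρ, Q ρ = Matrix.vecMulVec h (star h) - ((2 ^ ρ - 1 : ℝ) : ℂ) • M)
    (hQH : ∀ ρ, (Q ρ).IsHermitian) :
    (∀ ρ₁ ρ₂ : ℝ, 0 ≤ ρ₁ → ρ₁ ≤ ρ₂ → maxEig (hQH ρ₂) ≤ maxEig (hQH ρ₁)) ∧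
      ∃ ρmax : ℝ, 0 ≤ ρmax ∧
        ρmax = Real.logb 2 (1 + (star h ⬝ᵥ M⁻¹.mulVec h).re) ∧
        ∀ ρ : ℝ, 0 ≤ ρ →
          ((∃ v : Fin n → ℂ, star v ⬝ᵥ v = 1 ∧ star v ⬝ᵥ (Q ρ).mulVec v = 0) ↔ ρ ≤ ρmax) := by
  have hc : 0 ≤ (star h ⬝ᵥ M⁻¹ *ᵥ h).re := hM.inv.posSemidef.re_dotProduct_nonneg h
  refine ⟨fun ρ₁ ρ₂ _ h₁₂ => (hQH ρ₂).maxEig_mono (hQH ρ₁) ?_,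
    _, Real.logb_nonneg one_lt_two (by linarith), rfl, fun ρ hρ => ?_⟩
  · have hpow : (2 : ℝ) ^ ρ₁ ≤ 2 ^ ρ₂ := Real.rpow_le_rpow_of_exponent_le one_le_two h₁₂
    rw [le_iff, hQ, hQ, sub_sub_sub_cancel_left, ← sub_smul, ← Complex.ofReal_sub]
    exact hM.posSemidef.smul (by simpa using hpow)
  rw [Real.le_logb_iff_rpow_le one_lt_two (by linarith), hQ]
  constructor
  · rintro ⟨v, hv, hQv⟩
    have := hM.le_of_star_dotProduct_vecMulVec_sub_smul_mulVec_eq_zero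
      (by rintro rfl; simp at hv) hQv
    linarith
  · intro hρc
    have hρ1 : 1 ≤ (2 : ℝ) ^ ρ := Real.one_le_rpow one_le_two hρ
    obtain ⟨z, hz, hQz⟩ := hM.exists_ne_zero_star_dotProduct_vecMulVec_sub_smul_mulVec_eq_zero
      (by rw [Fintype.card_fin]; omega) h (t := 2 ^ ρ - 1) (by linarith) (by linarith)
    exact exists_unit_star_dotProduct_mulVec_eq_zero hz hQz
end
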